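/- arXiv:1412.5430 — 4 statements merged into one kernel-verified Lean document; each statement's English description precedes it below -/
import Mathlib

section
/- Let K ⊆ ℝ³ be a compact convex set with nonempty interior which is strictly convex, let u ∈ ℝ³ be nonzero and c ∈ ℝ, and suppose the hyperplane {y ∈ ℝ³ : ⟪y, u⟫ = c} meets the interior of K. Then the set {y ∈ frontier K : ⟪y, u⟫ = c}, with the subspace topology, is homeomorphic to the unit circle {z ∈ ℝ² : ‖z‖ = 1}. -/
/-!
The plane `⟪y, u⟫ = c` is an isometric copy of `ℝ²`, and the slice `S` of `K` it cuts out is a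
compact convex planar set. Because the plane passes through an interior point `p₀` of `K`,
convexity makes the interior and frontier of `S` inside the plane the traces of the interior and
frontier of `K`: a point of the slice that is interior within the plane lies strictly between `p₀`
and another point of `K`. So the `K`-circle is the frontier of a planar convex body, which gauge
rescaling maps homeomorphically onto the unit circle.
-/

open scoped RealInnerProductSpace

open Set Metric Module Filter Topology

section AffinePreimage

variable {E F : Type*} [AddCommGroup E] [Module ℝ E] [TopologicalSpace E]
  [IsTopologicalAddGroup E] [ContinuousSMul ℝ E]
  [AddCommGroup F] [Module ℝ F] [TopologicalSpace F] [IsTopologicalAddGroup F] [ContinuousSMul ℝ F]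
  {K : Set E} {f : F →ᵃ[ℝ] E}

theorem Convex.interior_preimage_affineMap (hK : Convex ℝ K) (hf : Continuous f)
    (hmeet : (f ⁻¹' interior K).Nonempty) : interior (f ⁻¹' K) = f ⁻¹' interior K := by
  refine (interior_maximal (preimage_mono interior_subset) (isOpen_interior.preimage hf)).antisymm'
    fun z hz ↦ ?_
  obtain ⟨z₀, hz₀⟩ := hmeet
  have hray : ∀ᶠ t in 𝓝[>] (1 : ℝ), AffineMap.lineMap z₀ z t ∈ f ⁻¹' K := by
    have hcont : Continuous fun t : ℝ ↦ AffineMap.lineMap z₀ z t := AffineMap.lineMap_continuous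
    exact nhdsWithin_le_nhds <|
      (hcont.tendsto' 1 z (by simp)).eventually_mem (mem_interior_iff_mem_nhds.mp hz)
  obtain ⟨t, htK, ht⟩ := (hray.and self_mem_nhdsWithin).exists
  have ht₀ : (0 : ℝ) < t := zero_lt_one.trans ht
  have hz_seg : z ∈ openSegment ℝ z₀ (AffineMap.lineMap z₀ z t) := by
    convert lineMap_mem_openSegment ℝ z₀ (AffineMap.lineMap z₀ z t)
      (show t⁻¹ ∈ Ioo (0 : ℝ) 1 from ⟨inv_pos.mpr ht₀, inv_lt_one_of_one_lt₀ ht⟩)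
    rw [AffineMap.lineMap_lineMap_right, inv_mul_cancel₀ ht₀.ne', AffineMap.lineMap_apply_one]
  have := image_openSegment ℝ f z₀ (AffineMap.lineMap z₀ z t) ▸ mem_image_of_mem f hz_seg
  exact hK.openSegment_interior_self_subset_interior hz₀ htK this

end AffinePreimage

theorem exists_affineIsometry_range_eq_hyperplane {E : Type*} [NormedAddCommGroup E]
    [InnerProductSpace ℝ E] {n : ℕ} [Fact (finrank ℝ E = n + 1)] {u : E} (hu : u ≠ 0) (p₀ : E) :
    ∃ f : EuclideanSpace ℝ (Fin n) →ᵃⁱ[ℝ] E, range f = {y | ⟪y, u⟫ = ⟪p₀, u⟫} := by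
  have : FiniteDimensional ℝ E := .of_fact_finrank_eq_succ n
  set W := (ℝ ∙ u)ᗮ
  have hW : finrank ℝ W = n := Submodule.finrank_orthogonal_span_singleton hu
  let φ : EuclideanSpace ℝ (Fin n) ≃ₗᵢ[ℝ] W :=
    ((stdOrthonormalBasis ℝ W).reindex (finCongr hW)).repr.symm
  refine ⟨(AffineIsometryEquiv.constVAdd ℝ E p₀).toAffineIsometry.comp
    (W.subtypeₗᵢ.comp φ.toLinearIsometry).toAffineIsometry, ?_⟩
  ext y
  calc y ∈ range (fun z ↦ p₀ + (φ z : E)) ↔ y - p₀ ∈ W :=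
        ⟨by rintro ⟨z, rfl⟩; simp, fun h ↦ ⟨φ.symm ⟨_, h⟩, by simp⟩⟩
    _ ↔ ⟪y, u⟫ = ⟪p₀, u⟫ := by
        rw [Submodule.mem_orthogonal_singleton_iff_inner_right, inner_sub_right, sub_eq_zero,
          real_inner_comm, real_inner_comm p₀]

theorem Convex.nonempty_frontier_homeomorph_sphere {E : Type*} [NormedAddCommGroup E]
    [NormedSpace ℝ E] {s : Set E} (hs : Convex ℝ s) (hne : (interior s).Nonempty)
    (hb : Bornology.IsBounded s) : Nonempty (frontier s ≃ₜ sphere (0 : E) 1) := by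
  obtain ⟨h, -, -, hfr⟩ := exists_homeomorph_image_interior_closure_frontier_eq_unitBall hs hne hb
  exact ⟨(h.image _).trans (.setCongr hfr)⟩

theorem kCircle_homeomorph_circle_general
    (K : Set (EuclideanSpace ℝ (Fin 3)))
    (hKcomp : IsCompact K) (hKconv : Convex ℝ K)
    (u : EuclideanSpace ℝ (Fin 3)) (hu : u ≠ 0) (c : ℝ)
    (hmeet : ({y : EuclideanSpace ℝ (Fin 3) | ⟪y, u⟫ = c} ∩ interior K).Nonempty) :
    Nonempty
      (({y ∈ frontier K | ⟪y, u⟫ = c} : Set (EuclideanSpace ℝ (Fin 3))) ≃ₜ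
        {z : EuclideanSpace ℝ (Fin 2) | ‖z‖ = 1}) := by
  obtain ⟨p₀, rfl : ⟪p₀, u⟫ = c, hp₀⟩ := hmeet
  have : Fact (finrank ℝ (EuclideanSpace ℝ (Fin 3)) = 2 + 1) := ⟨finrank_euclideanSpace_fin⟩
  obtain ⟨f, hf⟩ := exists_affineIsometry_range_eq_hyperplane (n := 2) hu p₀
  obtain ⟨z₀, rfl⟩ : p₀ ∈ range f := hf ▸ rfl
  have hplane : ∀ z, ⟪f z, u⟫ = ⟪f z₀, u⟫ := fun z ↦ hf.subset (mem_range_self z)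
  have hinterior : interior (f ⁻¹' K) = f ⁻¹' interior K := by
    simpa only [AffineIsometry.coe_toAffineMap] using
      hKconv.interior_preimage_affineMap (f := f.toAffineMap) f.continuous ⟨z₀, hp₀⟩
  have hfrontier : frontier (f ⁻¹' K) = f ⁻¹' frontier K := by
    rw [(hKcomp.isClosed.preimage f.continuous).frontier_eq, hinterior,
      hKcomp.isClosed.frontier_eq, preimage_sdiff]
  have hcircle : f ⁻¹' {y ∈ frontier K | ⟪y, u⟫ = ⟪f z₀, u⟫} = frontier (f ⁻¹' K) := by
    ext z
    simp [hfrontier, hplane]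
  have hS : Convex ℝ (f ⁻¹' K) := hKconv.affine_preimage f.toAffineMap
  obtain ⟨e⟩ := hS.nonempty_frontier_homeomorph_sphere (hinterior ▸ ⟨z₀, hp₀⟩)
    (f.isometry.isClosedEmbedding.isCompact_preimage hKcomp).isBounded
  have hC : {y ∈ frontier K | ⟪y, u⟫ = ⟪f z₀, u⟫} ⊆ range f := hf ▸ fun y hy ↦ hy.2
  exact ⟨(f.isometry.isEmbedding.homeomorphOfSubsetRange hC).symm.trans <|
    (Homeomorph.setCongr hcircle).trans <| e.trans <| .setCongr <| by ext; simp⟩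

/-- For a strictly convex body `K ⊆ ℝ³` and a plane
`{y | ⟪y, u⟫ = c}` meeting the interior of `K`, the set
`{y ∈ frontier K | ⟪y, u⟫ = c}` (a `K`-circle) is homeomorphic to the unit circle. -/
theorem kCircle_homeomorph_circle
    (K : Set (EuclideanSpace ℝ (Fin 3)))
    (hKcomp : IsCompact K) (hKconv : Convex ℝ K)
    (hKint : (interior K).Nonempty) (hKstrict : StrictConvex ℝ K)
    (u : EuclideanSpace ℝ (Fin 3)) (hu : u ≠ 0) (c : ℝ)
    (hmeet : ({y : EuclideanSpace ℝ (Fin 3) | ⟪y, u⟫ = c} ∩ interior K).Nonempty) :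
    Nonempty
      (({y ∈ frontier K | ⟪y, u⟫ = c} : Set (EuclideanSpace ℝ (Fin 3))) ≃ₜ
        {z : EuclideanSpace ℝ (Fin 2) | ‖z‖ = 1}) :=
  kCircle_homeomorph_circle_general K hKcomp hKconv u hu c hmeet
end

section
/- Let K ⊆ ℝ³ be a compact convex set with nonempty interior which is strictly convex and has smooth boundary in the sense that for every p ∈ frontier K there is exactly one unit vector u ∈ ℝ³ with ⟪y − p, u⟫ ≤ 0 for all y ∈ K. For i = 1, 2, 3 let Hᵢ = {y ∈ ℝ³ : ⟪y, uᵢ⟫ ≥ cᵢ} be closed half-spaces (uᵢ ≠ 0) whose bounding hyperplanes {y : ⟪y, uᵢ⟫ = cᵢ} meet the interior of K, and set Dᵢ = Hᵢ ∩ frontier K. If the three open pieces {y ∈ frontier K : ⟪y, uᵢ⟫ > cᵢ}, i = 1, 2, 3, are pairwise disjoint, then D₁ ∩ D₂ ∩ D₃ = ∅. -/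
/-!
Let `p` be a common point and `n` the unit outer normal at `p`. An open convex set `V` containing
`p + t • w` for all small `t > 0`, with `w ⊥ n`, meets `∂K`: otherwise `V` is connected, so either
`V ⊆ int K`, which puts `p + t • w` strictly below the supporting plane at `p`, or `V` misses `K`,
and separating `V` from `K` gives a unit outer normal at `p` other than `n`.

A cap whose boundary plane passes through `p` and meets `int K` has a normal with nonzero tangential
component. Three nonzero tangential vectors cannot be pairwise antiparallel, so two of the open
caps share a tangent direction at `p` (trivially so if `p` lies inside one of them); the
intersection of their half-spaces then meets `∂K`, contradicting disjointness.
-/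

open scoped RealInnerProductSpace

open Set Filter Topology

section

variable {E : Type*} [NormedAddCommGroup E] [InnerProductSpace ℝ E]

def IsUnitOuterNormal (K : Set E) (p n : E) : Prop :=
  ‖n‖ = 1 ∧ ∀ y ∈ K, ⟪y - p, n⟫ ≤ 0

theorem IsUnitOuterNormal.inner_sub_neg_of_mem_interior {K : Set E} {p n z : E}
    (hn : IsUnitOuterNormal K p n) (hz : z ∈ interior K) : ⟪z - p, n⟫ < 0 := by
  obtain ⟨r, hr, hball⟩ := Metric.mem_nhds_iff.1 (mem_interior_iff_mem_nhds.1 hz)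
  have hmem : z + (r / 2) • n ∈ K := hball <| by
    rw [Metric.mem_ball, dist_self_add_left, norm_smul, hn.1, mul_one,
      Real.norm_of_nonneg (by positivity)]
    linarith
  have := hn.2 _ hmem
  rw [add_sub_right_comm, inner_add_left, real_inner_smul_left, real_inner_self_eq_norm_sq,
    hn.1] at this
  linarith

theorem isUnitOuterNormal_inv_norm_smul {K : Set E} {p g : E} (hg : g ≠ 0)
    (h : ∀ y ∈ K, ⟪y - p, g⟫ ≤ 0) : IsUnitOuterNormal K p (‖g‖⁻¹ • g) :=
  ⟨norm_smul_inv_norm hg, fun y hy => by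
    rw [real_inner_smul_right]; exact mul_nonpos_of_nonneg_of_nonpos (by positivity) (h y hy)⟩

theorem IsUnitOuterNormal.orthogonalProjectionOnto_ne_zero {K : Set E} {p n u z : E}
    (hn : IsUnitOuterNormal K p n) (hu : u ≠ 0) (hz : z ∈ interior K) (hzu : ⟪z, u⟫ = ⟪p, u⟫) :
    (ℝ ∙ n)ᗮ.orthogonalProjectionOnto u ≠ 0 := by
  intro h
  rw [Submodule.orthogonalProjectionOnto_eq_zero_iff, Submodule.orthogonal_orthogonal,
    Submodule.mem_span_singleton] at h
  obtain ⟨r, rfl⟩ := h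
  have hr : r ≠ 0 := by rintro rfl; simp at hu
  have : r * ⟪z - p, n⟫ = 0 := by rw [← real_inner_smul_right, inner_sub_left, hzu, sub_self]
  exact (hn.inner_sub_neg_of_mem_interior hz).ne ((mul_eq_zero.1 this).resolve_left hr)

theorem exists_inner_sub_nonpos_of_disjoint [CompleteSpace E] {K V : Set E} {p : E}
    (hK : Convex ℝ K) (hp : p ∈ K) (hV : Convex ℝ V) (hVo : IsOpen V) (hpV : p ∈ closure V)
    (hVK : Disjoint V K) :
    ∃ g : E, (∀ y ∈ K, ⟪y - p, g⟫ ≤ 0) ∧ ∀ x ∈ V, 0 < ⟪x - p, g⟫ := by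
  obtain ⟨f, s, hfV, hfK⟩ := geometric_hahn_banach_open hV hVo hK hVK
  have hfp : f p = s := le_antisymm
    (closure_lt_subset_le f.continuous continuous_const (closure_mono (fun x hx => hfV x hx) hpV))
    (hfK p hp)
  refine ⟨-(InnerProductSpace.toDual ℝ E).symm f, fun y hy => ?_, fun x hx => ?_⟩ <;>
    rw [real_inner_comm, inner_neg_left, InnerProductSpace.toDual_symm_apply, map_sub, hfp]
  · linarith [hfK y hy]
  · linarith [hfV x hx]

theorem Convex.inter_frontier_nonempty_of_tangent [CompleteSpace E] {K V : Set E} {p n w : E}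
    (hV : Convex ℝ V) (hVo : IsOpen V) (hK : Convex ℝ K) (hp : p ∈ K)
    (hn : IsUnitOuterNormal K p n) (huniq : ∀ m, IsUnitOuterNormal K p m → m = n)
    (hw : ⟪w, n⟫ = 0) (hVw : ∀ᶠ t in 𝓝[>] (0 : ℝ), p + t • w ∈ V) :
    (V ∩ frontier K).Nonempty := by
  have hpV : p ∈ closure V := by
    refine mem_closure_of_tendsto ?_ hVw
    exact ((continuous_const.add (continuous_id.smul continuous_const)).tendsto' 0 p
      (by simp)).mono_left nhdsWithin_le_nhds
  obtain ⟨t, hx⟩ := hVw.exists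
  have hxn : ⟪p + t • w - p, n⟫ = 0 := by
    rw [add_sub_cancel_left, real_inner_smul_left, hw, mul_zero]
  by_contra hfr
  have hcover : V ⊆ interior K ∪ (closure K)ᶜ := fun y hy => by
    by_contra h
    simp only [mem_union, mem_compl_iff, not_or, not_not] at h
    exact hfr ⟨y, hy, h.2, h.1⟩
  rcases hV.isPreconnected.subset_or_subset isOpen_interior isClosed_closure.isOpen_compl
    (disjoint_compl_right_iff_subset.2 interior_subset_closure) hcover with hint | hext
  · exact (hn.inner_sub_neg_of_mem_interior (hint hx)).ne hxn
  · obtain ⟨g, hgK, hgV⟩ := exists_inner_sub_nonpos_of_disjoint hK hp hV hVo hpV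
      (disjoint_left.2 fun y hy hyK => hext hy (subset_closure hyK))
    have hg : g ≠ 0 := by rintro rfl; simpa using hgV _ hx
    rw [← huniq _ (isUnitOuterNormal_inv_norm_smul hg hgK), real_inner_smul_right] at hxn
    exact (mul_pos (inv_pos.2 (norm_pos_iff.2 hg)) (hgV _ hx)).ne' hxn

theorem isOpen_setOf_lt_inner (u : E) (c : ℝ) : IsOpen {y : E | c < ⟪y, u⟫} :=
  isOpen_lt continuous_const (continuous_id.inner continuous_const)

theorem convex_setOf_lt_inner (u : E) (c : ℝ) : Convex ℝ {y : E | c < ⟪y, u⟫} :=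
  convex_halfSpace_gt ⟨fun x y => inner_add_left x y u, fun r x => real_inner_smul_left x u r⟩ c

theorem eventually_lt_inner_add_smul {p u w : E} {c : ℝ} (hp : c ≤ ⟪p, u⟫)
    (h : c < ⟪p, u⟫ ∨ 0 < ⟪w, u⟫) : ∀ᶠ t in 𝓝[>] (0 : ℝ), c < ⟪p + t • w, u⟫ := by
  simp only [inner_add_left, real_inner_smul_left]
  rcases h with h | h
  · refine eventually_nhdsWithin_of_eventually_nhds ?_
    exact (continuous_const.add (continuous_id.mul continuous_const)).continuousAt.eventually
      (lt_mem_nhds (by simpa using h))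
  · exact eventually_nhdsWithin_of_forall fun t ht => by nlinarith [mem_Ioi.1 ht]

theorem inner_add_self_left_pos_of_norm_eq {e f : E} (hef : ‖e‖ = ‖f‖) (h : e + f ≠ 0) :
    0 < ⟪e + f, e⟫ := by
  have : 2 * ⟪e + f, e⟫ = ‖e + f‖ ^ 2 := by
    rw [norm_add_sq_real, ← hef, inner_add_left, real_inner_self_eq_norm_sq, real_inner_comm]
    ring
  nlinarith [norm_pos_iff.2 h]

theorem exists_pair_inner_pos (v : Fin 3 → E) (hv : ∀ k, v k ≠ 0) :
    ∃ i j, i ≠ j ∧ ∃ w, 0 < ⟪w, v i⟫ ∧ 0 < ⟪w, v j⟫ := by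
  set e : Fin 3 → E := fun k => ‖v k‖⁻¹ • v k
  have he : ∀ k, ‖e k‖ = 1 := fun k => norm_smul_inv_norm (hv k)
  have hpos : ∀ {i j}, e i + e j ≠ 0 → 0 < ⟪e i + e j, v i⟫ := fun {i j} h => by
    have := inner_add_self_left_pos_of_norm_eq ((he i).trans (he j).symm) h
    rw [real_inner_smul_right] at this
    exact pos_of_mul_pos_right this (by positivity)
  obtain ⟨i, j, hij, h⟩ : ∃ i j, i ≠ j ∧ e i + e j ≠ 0 := by
    by_contra! H
    have h1 := H 0 1 (by decide)
    have h2 := H 0 2 (by decide)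
    have h12 := H 1 2 (by decide)
    have : (2 : ℝ) • e 0 = 0 := by linear_combination (norm := module) h1 + h2 - h12
    simpa [he] using congrArg norm (smul_eq_zero.1 this |>.resolve_left two_ne_zero)
  exact ⟨i, j, hij, e i + e j, hpos h, by rw [add_comm] at h ⊢; exact hpos h⟩

theorem exists_pair_or_inner_pos (P : Fin 3 → Prop) (v : Fin 3 → E) (hv : ∀ k, ¬P k → v k ≠ 0) :
    ∃ i j, i ≠ j ∧ ∃ w, (P i ∨ 0 < ⟪w, v i⟫) ∧ (P j ∨ 0 < ⟪w, v j⟫) := by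
  by_cases hP : ∃ i, P i
  · obtain ⟨i, hi⟩ := hP
    obtain ⟨j, hji⟩ := exists_ne i
    refine ⟨i, j, hji.symm, v j, .inl hi, ?_⟩
    by_cases hj : P j
    exacts [.inl hj, .inr (real_inner_self_pos.2 (hv j hj))]
  · push Not at hP
    obtain ⟨i, j, hij, w, hi, hj⟩ := exists_pair_inner_pos v fun k => hv k (hP k)
    exact ⟨i, j, hij, w, .inr hi, .inr hj⟩

end

theorem three_kDisks_disjoint_interiors_no_common_point_general
    (K : Set (EuclideanSpace ℝ (Fin 3)))
    (hKcomp : IsCompact K) (hKconv : Convex ℝ K)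
    (hsmooth : ∀ p ∈ frontier K,
      ∃! u : EuclideanSpace ℝ (Fin 3), ‖u‖ = 1 ∧ ∀ y ∈ K, ⟪y - p, u⟫ ≤ 0)
    (u : Fin 3 → EuclideanSpace ℝ (Fin 3)) (c : Fin 3 → ℝ)
    (hu : ∀ i, u i ≠ 0)
    (hmeet : ∀ i, ({y : EuclideanSpace ℝ (Fin 3) | ⟪y, u i⟫ = c i} ∩ interior K).Nonempty)
    (hdisj : Pairwise fun i j =>
      Disjoint {y ∈ frontier K | c i < ⟪y, u i⟫} {y ∈ frontier K | c j < ⟪y, u j⟫}) :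
    ({y : EuclideanSpace ℝ (Fin 3) | c 0 ≤ ⟪y, u 0⟫} ∩ frontier K) ∩
      ({y : EuclideanSpace ℝ (Fin 3) | c 1 ≤ ⟪y, u 1⟫} ∩ frontier K) ∩
      ({y : EuclideanSpace ℝ (Fin 3) | c 2 ≤ ⟪y, u 2⟫} ∩ frontier K) = ∅ := by
  refine eq_empty_iff_forall_notMem.2 fun p ⟨⟨⟨hp0, hpK⟩, hp1, _⟩, hp2, _⟩ => ?_
  have hle : ∀ k, c k ≤ ⟪p, u k⟫ := fun k => by fin_cases k <;> assumption
  obtain ⟨n, hn, huniq⟩ : ∃! n, IsUnitOuterNormal K p n := hsmooth p hpK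
  have htangent : ∀ k, ¬c k < ⟪p, u k⟫ → (ℝ ∙ n)ᗮ.orthogonalProjectionOnto (u k) ≠ 0 := by
    intro k hk
    obtain ⟨z, hzu, hz⟩ := hmeet k
    exact hn.orthogonalProjectionOnto_ne_zero (hu k) hz (hzu.trans ((hle k).eq_of_not_lt hk))
  obtain ⟨i, j, hij, w, hi, hj⟩ := exists_pair_or_inner_pos _ _ htangent
  simp only [Submodule.inner_orthogonalProjectionOnto_eq_of_mem_left] at hi hj
  obtain ⟨y, ⟨hyi, hyj⟩, hyK⟩ := Convex.inter_frontier_nonempty_of_tangent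
    ((convex_setOf_lt_inner _ _).inter (convex_setOf_lt_inner _ _))
    ((isOpen_setOf_lt_inner _ _).inter (isOpen_setOf_lt_inner _ _)) hKconv
    (hKcomp.isClosed.frontier_subset hpK) hn huniq
    (Submodule.mem_orthogonal_singleton_iff_inner_left.1 w.2)
    ((eventually_lt_inner_add_smul (hle i) hi).and (eventually_lt_inner_add_smul (hle j) hj))
  exact disjoint_left.1 (hdisj hij) ⟨hyK, hyi⟩ ⟨hyK, hyj⟩

/-- For a smooth strictly convex body `K ⊆ ℝ³`, three `K`-disks
whose (relative) interiors are pairwise disjoint cannot have a common point. -/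
theorem three_kDisks_disjoint_interiors_no_common_point
    (K : Set (EuclideanSpace ℝ (Fin 3)))
    (hKcomp : IsCompact K) (hKconv : Convex ℝ K)
    (hKint : (interior K).Nonempty) (hKstrict : StrictConvex ℝ K)
    (hsmooth : ∀ p ∈ frontier K,
      ∃! u : EuclideanSpace ℝ (Fin 3), ‖u‖ = 1 ∧ ∀ y ∈ K, ⟪y - p, u⟫ ≤ 0)
    (u : Fin 3 → EuclideanSpace ℝ (Fin 3)) (c : Fin 3 → ℝ)
    (hu : ∀ i, u i ≠ 0)
    (hmeet : ∀ i, ({y : EuclideanSpace ℝ (Fin 3) | ⟪y, u i⟫ = c i} ∩ interior K).Nonempty)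
    (hdisj : Pairwise fun i j =>
      Disjoint {y ∈ frontier K | c i < ⟪y, u i⟫} {y ∈ frontier K | c j < ⟪y, u j⟫}) :
    ({y : EuclideanSpace ℝ (Fin 3) | c 0 ≤ ⟪y, u 0⟫} ∩ frontier K) ∩
      ({y : EuclideanSpace ℝ (Fin 3) | c 1 ≤ ⟪y, u 1⟫} ∩ frontier K) ∩
      ({y : EuclideanSpace ℝ (Fin 3) | c 2 ≤ ⟪y, u 2⟫} ∩ frontier K) = ∅ :=
  three_kDisks_disjoint_interiors_no_common_point_general K hKcomp hKconv hsmooth u c hu hmeet hdisj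
end

section
/- Let K ⊆ ℝ³ be a compact convex set with nonempty interior which is strictly convex and has smooth boundary in the sense that for every p ∈ frontier K there is exactly one unit vector n(p) ∈ ℝ³ with ⟪y − p, n(p)⟫ ≥ 0 for all y ∈ K (the unit inner normal at p). Let x ∈ ℝ³ \ K and define the visible region O_x = {p ∈ frontier K : ⟪p − x, n(p)⟫ ≥ 0}. Then O_x, with the subspace topology, is homeomorphic to the closed unit disk {z ∈ ℝ² : ‖z‖ ≤ 1}. -/
open scoped RealInnerProductSpace
open Set Metric Module Topology Filter
open scoped Pointwise

/-!
Separate `x` from `K` by a hyperplane with normal `ν` and project centrally from `x` onto a plane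
orthogonal to `ν`. The first point of `K` on a ray from `x` is visible: the ray back towards `x`
misses `K`, so some supporting hyperplane there has `x` on its far side, and by uniqueness of the
normal it is the one with normal `n p`. By strict convexity a supporting hyperplane touches `K`
only once, so no ray carries two visible points. Hence the projection maps the compact set `O_x`
bijectively, so homeomorphically, onto the shadow of `K`, a compact convex set with nonempty
interior in a plane, i.e. a disk.
-/

section SupportingHyperplane

variable {E : Type*} [NormedAddCommGroup E] [InnerProductSpace ℝ E] {K : Set E}

def IsInnerNormal (K : Set E) (p u : E) : Prop := ∀ y ∈ K, 0 ≤ ⟪y - p, u⟫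

theorem IsInnerNormal.smul {p u : E} (hu : IsInnerNormal K p u) {c : ℝ} (hc : 0 ≤ c) :
    IsInnerNormal K p (c • u) := fun y hy => by
  rw [real_inner_smul_right]
  exact mul_nonneg hc (hu y hy)

theorem IsInnerNormal.inner_sub_pos_of_mem_interior {p u z : E} (hu : IsInnerNormal K p u)
    (hu0 : u ≠ 0) (hz : z ∈ interior K) : 0 < ⟪z - p, u⟫ := by
  have hnear : ∀ᶠ t in 𝓝 (0 : ℝ), z - t • u ∈ K := by
    have : Tendsto (fun t : ℝ => z - t • u) (𝓝 0) (𝓝 z) :=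
      Continuous.tendsto' (by fun_prop) 0 z (by simp)
    exact this.eventually (mem_interior_iff_mem_nhds.1 hz)
  obtain ⟨t, hzt, ht⟩ := ((hnear.filter_mono nhdsWithin_le_nhds).and
    (self_mem_nhdsWithin : Ioi (0 : ℝ) ∈ 𝓝[>] 0)).exists
  have h := hu _ hzt
  rw [sub_right_comm, inner_sub_left, real_inner_smul_left, real_inner_self_eq_norm_sq] at h
  have : 0 < t * ‖u‖ ^ 2 := mul_pos ht (by positivity)
  linarith

theorem IsInnerNormal.inner_sub_pos_of_strictConvex (hK : StrictConvex ℝ K) {p q u : E}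
    (hu : IsInnerNormal K q u) (hu0 : u ≠ 0) (hp : p ∈ K) (hq : q ∈ K) (hpq : p ≠ q) :
    0 < ⟪p - q, u⟫ := by
  have hmid := hu.inner_sub_pos_of_mem_interior hu0
    (hK hp hq hpq one_half_pos one_half_pos (add_halves 1))
  rwa [show (1 / 2 : ℝ) • p + (1 / 2 : ℝ) • q - q = (1 / 2 : ℝ) • (p - q) by module,
    real_inner_smul_left, mul_pos_iff_of_pos_left one_half_pos] at hmid

theorem exists_pos_add_smul_sub_mem_forall_lt_notMem (hKc : IsClosed K) (hK : Convex ℝ K)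
    {x y : E} (hx : x ∉ K) (hy : y ∈ K) :
    ∃ t : ℝ, 0 < t ∧ x + t • (y - x) ∈ K ∧ ∀ s < t, x + s • (y - x) ∉ K := by
  set T : Set ℝ := {t | x + t • (y - x) ∈ K}
  have hT : T = AffineMap.lineMap x y ⁻¹' K := by
    ext t; simp [T, AffineMap.lineMap_apply_module', add_comm]
  have hT1 : (1 : ℝ) ∈ T := by simpa [T] using hy
  have hTpos : T ⊆ Ioi 0 := fun t ht => by
    by_contra hle
    have hord := (hK.affine_preimage (AffineMap.lineMap x y)).ordConnected
    rw [← hT] at hord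
    exact hx (by simpa [T] using hord.out ht hT1 ⟨not_lt.1 hle, zero_le_one⟩)
  have hbdd : BddBelow T := ⟨0, fun t ht => (hTpos ht).le⟩
  have hTc : IsClosed T := hKc.preimage (by fun_prop)
  have hmem : sInf T ∈ T := hTc.csInf_mem ⟨1, hT1⟩ hbdd
  exact ⟨sInf T, hTpos hmem, hmem, fun s hs => notMem_of_lt_csInf (s := T) hs hbdd⟩

variable [CompleteSpace E]

theorem exists_inner_sub_pos_of_notMem (hKc : IsClosed K) (hK : Convex ℝ K) {x : E}
    (hx : x ∉ K) : ∃ ν : E, ∀ y ∈ K, 0 < ⟪y - x, ν⟫ := by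
  obtain ⟨f, u, hfx, hfK⟩ := geometric_hahn_banach_point_closed hK hKc hx
  refine ⟨(InnerProductSpace.toDual ℝ E).symm f, fun y hy => ?_⟩
  rw [real_inner_comm, InnerProductSpace.toDual_symm_apply, map_sub]
  linarith [hfK y hy]

/-- The hyperplane is obtained by separating the open ray from the open convex set
`interior K`. -/
theorem exists_isInnerNormal_inner_nonpos (hK : Convex ℝ K) (hKi : (interior K).Nonempty)
    {p v : E} (hp : p ∈ K) (hray : ∀ t : ℝ, 0 < t → p + t • v ∉ K) :
    ∃ w : E, w ≠ 0 ∧ IsInnerNormal K p w ∧ ⟪v, w⟫ ≤ 0 := by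
  set R : Set E := (fun t : ℝ => p + t • v) '' Ioi 0
  have hR : Convex ℝ R := by
    simpa [R, image_image] using
      ((convex_Ioi (0 : ℝ)).linear_image (LinearMap.toSpanSingleton ℝ E v)).translate p
  have hdisj : Disjoint (interior K) R := by
    rw [disjoint_right]
    rintro _ ⟨t, ht, rfl⟩ hint
    exact hray t ht (interior_subset hint)
  obtain ⟨f, u, hfK, hfR⟩ := geometric_hahn_banach_open hK.interior isOpen_interior hR hdisj
  have hfK' : ∀ y ∈ K, f y ≤ u := by
    have : K ⊆ closure (interior K) := by
      rw [hK.closure_interior_eq_closure_of_nonempty_interior hKi]; exact subset_closure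
    exact fun y hy => closure_minimal (fun a ha => (hfK a ha).le)
      (isClosed_le f.continuous continuous_const) (this hy)
  have hfp : u ≤ f p := by
    have : Tendsto (fun t : ℝ => f (p + t • v)) (𝓝[>] 0) (𝓝 (f p)) :=
      (Continuous.tendsto' (by fun_prop) 0 _ (by simp)).mono_left nhdsWithin_le_nhds
    exact ge_of_tendsto this (eventually_nhdsWithin_of_forall fun t ht => hfR _ ⟨t, ht, rfl⟩)
  have hfv : 0 ≤ f v := by
    have : u ≤ f (p + (1 : ℝ) • v) := hfR _ ⟨1, mem_Ioi.2 one_pos, rfl⟩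
    rw [one_smul, map_add] at this
    linarith [hfK' p hp]
  set w := -(InnerProductSpace.toDual ℝ E).symm f
  have hw : ∀ y, ⟪y, w⟫ = -f y := fun y => by
    rw [inner_neg_right, real_inner_comm, InnerProductSpace.toDual_symm_apply]
  obtain ⟨a, ha⟩ := hKi
  refine ⟨w, fun h0 => ?_, fun y hy => ?_, by rw [hw]; linarith⟩
  · have := hw (p - a)
    rw [h0, inner_zero_right, map_sub] at this
    linarith [hfK a ha]
  · rw [hw, map_sub]
    linarith [hfK' y hy]

end SupportingHyperplane

section VisibleRegion

variable {E : Type*} [NormedAddCommGroup E] [InnerProductSpace ℝ E] {K : Set E} {n : E → E}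

/-- The paper's `O_x`. -/
def visibleRegion (K : Set E) (n : E → E) (x : E) : Set E :=
  {p ∈ frontier K | 0 ≤ ⟪p - x, n p⟫}

theorem mem_visibleRegion_of_forall_add_smul_notMem [CompleteSpace E] (hK : Convex ℝ K)
    (hKi : (interior K).Nonempty)
    (hn_unique : ∀ p ∈ frontier K, ∀ u : E, ‖u‖ = 1 → IsInnerNormal K p u → u = n p)
    {p x : E} (hp : p ∈ K) (hray : ∀ t : ℝ, 0 < t → p + t • (x - p) ∉ K) :
    p ∈ visibleRegion K n x := by
  obtain ⟨w, hw0, hw, hxw⟩ := exists_isInnerNormal_inner_nonpos hK hKi hp hray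
  have hpf : p ∈ frontier K := ⟨subset_closure hp, fun hint => by
    simpa using hw.inner_sub_pos_of_mem_interior hw0 hint⟩
  have hnp := hn_unique p hpf _ (norm_smul_inv_norm hw0) (hw.smul (inv_nonneg.2 (norm_nonneg w)))
  refine ⟨hpf, ?_⟩
  rw [← hnp, real_inner_smul_right, ← neg_sub, inner_neg_left]
  exact mul_nonneg (inv_nonneg.2 (norm_nonneg w)) (neg_nonneg.2 hxw)

/-- The first point of `K` on the ray from `x` through `y` is visible. -/
theorem exists_pos_add_smul_sub_mem_visibleRegion [CompleteSpace E] (hKc : IsClosed K)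
    (hK : Convex ℝ K) (hKi : (interior K).Nonempty)
    (hn_unique : ∀ p ∈ frontier K, ∀ u : E, ‖u‖ = 1 → IsInnerNormal K p u → u = n p)
    {x y : E} (hx : x ∉ K) (hy : y ∈ K) :
    ∃ t : ℝ, 0 < t ∧ x + t • (y - x) ∈ visibleRegion K n x := by
  obtain ⟨t, ht, htK, hfirst⟩ := exists_pos_add_smul_sub_mem_forall_lt_notMem hKc hK hx hy
  refine ⟨t, ht, mem_visibleRegion_of_forall_add_smul_notMem hK hKi hn_unique htK fun c hc => ?_⟩
  rw [show x + t • (y - x) + c • (x - (x + t • (y - x))) = x + ((1 - c) * t) • (y - x) by module]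
  exact hfirst _ (by nlinarith)

theorem add_smul_sub_eq_of_mem_visibleRegion (hKc : IsClosed K) (hKs : StrictConvex ℝ K)
    (hn : ∀ p ∈ frontier K, ‖n p‖ = 1 ∧ IsInnerNormal K p (n p)) {x q : E}
    (hq : q ∈ visibleRegion K n x) {t : ℝ} (ht : t ≤ 1) (hp : x + t • (q - x) ∈ K) :
    x + t • (q - x) = q := by
  by_contra hpq
  have hpos := (hn q hq.1).2.inner_sub_pos_of_strictConvex hKs
    (norm_ne_zero_iff.1 ((hn q hq.1).1.symm ▸ one_ne_zero)) hp (hKc.frontier_subset hq.1) hpq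
  rw [show x + t • (q - x) - q = (t - 1) • (q - x) by module, real_inner_smul_left] at hpos
  nlinarith [hq.2]

theorem isCompact_visibleRegion [FiniteDimensional ℝ E] (hKc : IsCompact K)
    (hn : ∀ p ∈ frontier K, ‖n p‖ = 1 ∧ IsInnerNormal K p (n p))
    (hn_unique : ∀ p ∈ frontier K, ∀ u : E, ‖u‖ = 1 → IsInnerNormal K p u → u = n p) (x : E) :
    IsCompact (visibleRegion K n x) := by
  set N : Set (E × E) := {pu | pu.1 ∈ frontier K ∧ ‖pu.2‖ = 1 ∧ IsInnerNormal K pu.1 pu.2 ∧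
    0 ≤ ⟪pu.1 - x, pu.2⟫}
  have hN : IsClosed N := by
    simp only [N, IsInnerNormal, ofPred_and, ofPred_forall]
    exact (isClosed_frontier.preimage continuous_fst).inter <|
      (isClosed_eq (by fun_prop) continuous_const).inter <|
      (isClosed_biInter fun y _ => isClosed_le continuous_const (by fun_prop)).inter
      (isClosed_le continuous_const (by fun_prop))
  have hNK : N ⊆ K ×ˢ closedBall 0 1 := fun pu hpu =>
    ⟨hKc.isClosed.frontier_subset hpu.1, by simp [hpu.2.1]⟩
  have hO : visibleRegion K n x = Prod.fst '' N := by
    ext p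
    constructor
    · rintro ⟨hpf, hpx⟩
      exact ⟨(p, n p), ⟨hpf, (hn p hpf).1, (hn p hpf).2, hpx⟩, rfl⟩
    · rintro ⟨⟨p, u⟩, ⟨hpf, hu1, hu, hpx⟩, rfl⟩
      exact ⟨hpf, hn_unique p hpf u hu1 hu ▸ hpx⟩
  rw [hO]
  exact ((hKc.prod (isCompact_closedBall 0 1)).of_isClosed_subset hN hNK).image continuous_fst

end VisibleRegion

section CentralProjection

variable {E : Type*} [NormedAddCommGroup E] [InnerProductSpace ℝ E] {K : Set E} {x ν : E}

/-- The central projection from `x` onto the affine plane `{v | ⟪v - x, ν⟫ = 1}`, read in the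
coordinates of `(ℝ ∙ ν)ᗮ`. -/
noncomputable def centralProjection (x ν y : E) : (ℝ ∙ ν)ᗮ :=
  (ℝ ∙ ν)ᗮ.orthogonalProjectionOnto (⟪y - x, ν⟫⁻¹ • (y - x))

theorem centralProjection_add_smul_sub (x ν y : E) {t : ℝ} (ht : t ≠ 0) :
    centralProjection x ν (x + t • (y - x)) = centralProjection x ν y := by
  rw [centralProjection, add_sub_cancel_left, real_inner_smul_left, smul_smul, mul_inv,
    mul_right_comm, inv_mul_cancel₀ ht, one_mul, centralProjection]

theorem coe_centralProjection_add_smul {y : E} (hy : ⟪y - x, ν⟫ ≠ 0) :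
    (centralProjection x ν y : E) + (‖ν‖ ^ 2)⁻¹ • ν = ⟪y - x, ν⟫⁻¹ • (y - x) := by
  have hv : ⟪ν, ⟪y - x, ν⟫⁻¹ • (y - x)⟫ = 1 := by
    rw [real_inner_smul_right, real_inner_comm (y - x) ν, inv_mul_cancel₀ hy]
  have hsplit := (ℝ ∙ ν).starProjection_add_starProjection_orthogonal (⟪y - x, ν⟫⁻¹ • (y - x))
  rw [Submodule.starProjection_singleton, hv, Submodule.starProjection_apply] at hsplit
  simpa [centralProjection, add_comm] using hsplit

theorem eq_add_smul_sub_of_centralProjection_eq {p q : E} (hp : ⟪p - x, ν⟫ ≠ 0)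
    (hq : ⟪q - x, ν⟫ ≠ 0) (h : centralProjection x ν p = centralProjection x ν q) :
    p = x + (⟪p - x, ν⟫ / ⟪q - x, ν⟫) • (q - x) := by
  have hpq := coe_centralProjection_add_smul hp
  rw [h, coe_centralProjection_add_smul hq] at hpq
  rw [div_eq_mul_inv, mul_smul, hpq, smul_smul, mul_inv_cancel₀ hp, one_smul, add_sub_cancel]

theorem continuousOn_centralProjection (x ν : E) :
    ContinuousOn (centralProjection x ν) {y | ⟪y - x, ν⟫ ≠ 0} :=
  (ContinuousLinearMap.continuous _).comp_continuousOn
    ((((continuous_id.sub continuous_const).inner continuous_const).continuousOn.inv₀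
      fun _ hy => hy).smul (continuous_id.sub continuous_const).continuousOn)

/-- The image of `K` is the linear image of the slice `{⟪ν, v⟫ = 1}` of the convex cone spanned
by `K - x`. -/
theorem Convex.centralProjection_image (hK : Convex ℝ K) (hKx : ∀ y ∈ K, 0 < ⟪y - x, ν⟫) :
    Convex ℝ (centralProjection x ν '' K) := by
  set C := ConvexCone.hull ℝ ((fun y => -x + y) '' K)
  have hC : (C : Set E) = {v | ∃ r : ℝ, 0 < r ∧ v ∈ r • ((fun y => -x + y) '' K)} :=
    ConvexCone.coe_hull_of_convex (hK.translate (-x))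
  have hslice : Convex ℝ {v : E | ⟪ν, v⟫ = 1} :=
    (convex_singleton (1 : ℝ)).linear_preimage (innerₛₗ ℝ ν)
  have himage : centralProjection x ν '' K =
      (ℝ ∙ ν)ᗮ.orthogonalProjectionOnto '' ((C : Set E) ∩ {v | ⟪ν, v⟫ = 1}) := by
    ext w
    constructor
    · rintro ⟨y, hy, rfl⟩
      refine ⟨_, ⟨?_, ?_⟩, rfl⟩
      · rw [hC]
        exact ⟨_, inv_pos.2 (hKx y hy), smul_mem_smul_set ⟨y, hy, neg_add_eq_sub x y⟩⟩
      · rw [mem_ofPred_eq, real_inner_smul_right, real_inner_comm (y - x) ν,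
          inv_mul_cancel₀ (hKx y hy).ne']
    · rintro ⟨v, ⟨hvC, hv1⟩, rfl⟩
      rw [hC] at hvC
      obtain ⟨r, -, _, ⟨y, hy, rfl⟩, rfl⟩ := hvC
      dsimp only at hv1 ⊢
      rw [mem_ofPred_eq, neg_add_eq_sub, real_inner_smul_right, real_inner_comm (y - x) ν] at hv1
      refine ⟨y, hy, ?_⟩
      rw [centralProjection, neg_add_eq_sub, eq_inv_of_mul_eq_one_right hv1, inv_inv]
  rw [himage]
  exact (C.convex.inter hslice).linear_image _

theorem centralProjection_mem_interior_image {z : E} (hz : z ∈ interior K)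
    (hzx : ⟪z - x, ν⟫ ≠ 0) :
    centralProjection x ν z ∈ interior (centralProjection x ν '' K) := by
  have hν : ν ≠ 0 := by
    rintro rfl
    simp at hzx
  -- a continuous right inverse of the projection that sends `centralProjection x ν z` to `z`
  set A : (ℝ ∙ ν)ᗮ → E := fun w => x + ⟪z - x, ν⟫ • ((w : E) + (‖ν‖ ^ 2)⁻¹ • ν)
  have hA : ∀ w, centralProjection x ν (A w) = w := by
    intro w
    have hw : ⟪(w : E), ν⟫ = 0 := Submodule.mem_orthogonal_singleton_iff_inner_left.1 w.2
    have hgA : ⟪A w - x, ν⟫ = ⟪z - x, ν⟫ := by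
      simp [A, inner_add_left, real_inner_smul_left, hw, hν]
    rw [centralProjection, hgA]
    simp only [A, add_sub_cancel_left, smul_smul, inv_mul_cancel₀ hzx,
      one_smul, map_add, map_smul, Submodule.orthogonalProjectionOnto_mem_subspace_eq_self,
      Submodule.orthogonalProjectionOnto_orthogonalComplement_singleton_eq_zero, smul_zero,
      add_zero]
  have hAz : A (centralProjection x ν z) = z := by
    simp only [A, coe_centralProjection_add_smul hzx, smul_smul, mul_inv_cancel₀ hzx, one_smul,
      add_sub_cancel]
  refine mem_interior.2 ⟨A ⁻¹' interior K, fun w hw => ⟨A w, interior_subset hw, hA w⟩,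
    isOpen_interior.preimage (by fun_prop), ?_⟩
  rwa [mem_preimage, hAz]

variable {n : E → E}

theorem injOn_centralProjection_visibleRegion (hKc : IsClosed K) (hKs : StrictConvex ℝ K)
    (hn : ∀ p ∈ frontier K, ‖n p‖ = 1 ∧ IsInnerNormal K p (n p))
    (hKx : ∀ y ∈ K, 0 < ⟪y - x, ν⟫) :
    InjOn (centralProjection x ν) (visibleRegion K n x) := by
  have key : ∀ p ∈ visibleRegion K n x, ∀ q ∈ visibleRegion K n x,
      centralProjection x ν p = centralProjection x ν q → ⟪p - x, ν⟫ ≤ ⟪q - x, ν⟫ → p = q := by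
    intro p hp q hq h hle
    have hpK := hKc.frontier_subset hp.1
    have hqK := hKc.frontier_subset hq.1
    have hp_eq := eq_add_smul_sub_of_centralProjection_eq (hKx p hpK).ne' (hKx q hqK).ne' h
    rw [hp_eq]
    exact add_smul_sub_eq_of_mem_visibleRegion hKc hKs hn hq ((div_le_one (hKx q hqK)).2 hle)
      (hp_eq ▸ hpK)
  intro p hp q hq h
  rcases le_total ⟪p - x, ν⟫ ⟪q - x, ν⟫ with hle | hle
  · exact key p hp q hq h hle
  · exact (key q hq p hp h.symm hle).symm

theorem centralProjection_image_visibleRegion [CompleteSpace E] (hKc : IsClosed K)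
    (hK : Convex ℝ K) (hKi : (interior K).Nonempty)
    (hn_unique : ∀ p ∈ frontier K, ∀ u : E, ‖u‖ = 1 → IsInnerNormal K p u → u = n p)
    (hx : x ∉ K) :
    centralProjection x ν '' visibleRegion K n x = centralProjection x ν '' K := by
  refine (image_mono fun p hp => hKc.frontier_subset hp.1).antisymm ?_
  rintro _ ⟨y, hy, rfl⟩
  obtain ⟨t, ht, hmem⟩ := exists_pos_add_smul_sub_mem_visibleRegion hKc hK hKi hn_unique hx hy
  exact ⟨_, hmem, centralProjection_add_smul_sub x ν y ht.ne'⟩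

end CentralProjection

theorem IsCompact.nonempty_homeomorph_image_of_injOn {X Y : Type*} [TopologicalSpace X]
    [TopologicalSpace Y] [T2Space Y] {f : X → Y} {s : Set X} (hs : IsCompact s)
    (hfc : ContinuousOn f s) (hf : InjOn f s) : Nonempty (s ≃ₜ f '' s) := by
  have := isCompact_iff_compactSpace.1 hs
  exact ⟨(hfc.domRestrict.isClosedEmbedding hf.injective).isEmbedding.toHomeomorph.trans
    (Homeomorph.setCongr (range_domRestrict f s))⟩

theorem Convex.nonempty_homeomorph_closedBall {F : Type*} [NormedAddCommGroup F]
    [NormedSpace ℝ F] [FiniteDimensional ℝ F] {S : Set F} (hS : Convex ℝ S) (hSc : IsCompact S)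
    (hSi : (interior S).Nonempty) {m : ℕ} (hF : finrank ℝ F = m) :
    Nonempty (S ≃ₜ closedBall (0 : EuclideanSpace ℝ (Fin m)) 1) := by
  let L : F ≃L[ℝ] EuclideanSpace ℝ (Fin m) :=
    ContinuousLinearEquiv.ofFinrankEq (hF.trans finrank_euclideanSpace_fin.symm)
  have hLc : IsCompact (L '' S) := hSc.image L.continuous
  have hLS : Convex ℝ (L '' S) := hS.linear_image (L : F →ₗ[ℝ] EuclideanSpace ℝ (Fin m))
  have hLi : (interior (L '' S)).Nonempty := by
    simpa using L.toHomeomorph.image_interior S ▸ hSi.image L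
  obtain ⟨h, -, hcl, -⟩ :=
    exists_homeomorph_image_interior_closure_frontier_eq_unitBall hLS hLi hLc.isBounded
  rw [hLc.isClosed.closure_eq] at hcl
  exact ⟨(L.toHomeomorph.image S).trans ((h.image _).trans (Homeomorph.setCongr hcl))⟩

/-- For a smooth strictly convex body `K ⊆ ℝ³` with unit inner
normal `n p` at each boundary point `p`, and a point `x ∉ K`, the visible region
`O_x = {p ∈ frontier K | ⟪p - x, n p⟫ ≥ 0}` is homeomorphic to the closed unit disk. -/
theorem visible_region_homeomorph_disk
    (K : Set (EuclideanSpace ℝ (Fin 3)))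
    (hKcomp : IsCompact K) (hKconv : Convex ℝ K)
    (hKint : (interior K).Nonempty) (hKstrict : StrictConvex ℝ K)
    (n : EuclideanSpace ℝ (Fin 3) → EuclideanSpace ℝ (Fin 3))
    (hn : ∀ p ∈ frontier K, ‖n p‖ = 1 ∧ ∀ y ∈ K, 0 ≤ ⟪y - p, n p⟫)
    (hn_unique : ∀ p ∈ frontier K, ∀ u : EuclideanSpace ℝ (Fin 3),
      ‖u‖ = 1 → (∀ y ∈ K, 0 ≤ ⟪y - p, u⟫) → u = n p)
    (x : EuclideanSpace ℝ (Fin 3)) (hx : x ∉ K) :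
    Nonempty
      (({p ∈ frontier K | 0 ≤ ⟪p - x, n p⟫} : Set (EuclideanSpace ℝ (Fin 3))) ≃ₜ
        {z : EuclideanSpace ℝ (Fin 2) | ‖z‖ ≤ 1}) := by
  have hKc := hKcomp.isClosed
  obtain ⟨ν, hν⟩ := exists_inner_sub_pos_of_notMem hKc hKconv hx
  obtain ⟨z, hz⟩ := hKint
  have hν0 : ν ≠ 0 := by
    rintro rfl
    simpa using hν z (interior_subset hz)
  have : Fact (finrank ℝ (EuclideanSpace ℝ (Fin 3)) = 2 + 1) := ⟨finrank_euclideanSpace_fin⟩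
  have hΦc : ContinuousOn (centralProjection x ν) K :=
    (continuousOn_centralProjection x ν).mono fun y hy => (hν y hy).ne'
  obtain ⟨eS⟩ := (hKconv.centralProjection_image hν).nonempty_homeomorph_closedBall
    (hKcomp.image_of_continuousOn hΦc)
    ⟨_, centralProjection_mem_interior_image hz (hν z (interior_subset hz)).ne'⟩
    (Submodule.finrank_orthogonal_span_singleton (n := 2) hν0)
  obtain ⟨eO⟩ := (isCompact_visibleRegion hKcomp hn hn_unique x).nonempty_homeomorph_image_of_injOn
    (hΦc.mono fun p hp => hKc.frontier_subset hp.1)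
    (injOn_centralProjection_visibleRegion hKc hKstrict hn hν)
  rw [centralProjection_image_visibleRegion hKc hKconv ⟨z, hz⟩ hn_unique hx] at eO
  exact ⟨eO.trans (eS.trans (Homeomorph.setCongr (by ext; simp)))⟩
end

section
/- Let K ⊆ ℝ³ be a compact convex set with nonempty interior which is strictly convex, let u ∈ ℝ³ be nonzero and c ∈ ℝ, and suppose the hyperplane {y ∈ ℝ³ : ⟪y, u⟫ = c} meets the interior of K. Let D = {y ∈ frontier K : ⟪y, u⟫ ≥ c}. Then, with respect to the subspace topology on frontier K, the interior of D equals {y ∈ frontier K : ⟪y, u⟫ > c} and the frontier of D equals {y ∈ frontier K : ⟪y, u⟫ = c}. -/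
/-!
A boundary point `y` of `K` on the plane `ℓ = c` is a limit of boundary points with `ℓ < c`:
radially project, from a point `x₀` of the plane interior to `K`, points with `ℓ < c`
converging to `y`; since `x₀` lies on the plane, the projection keeps them on the side `ℓ < c`.
So no point of the plane is interior to the closed set `D = {c ≤ ℓ}` of `frontier K`.
-/

open scoped RealInnerProductSpace

open Set Topology

section HalfspaceClosure

variable {E : Type*} [AddCommGroup E] [Module ℝ E] [TopologicalSpace E]
  [IsTopologicalAddGroup E] [ContinuousSMul ℝ E]

theorem mem_closure_frontier_inter_neg_of_mem_nhds_zero {K : Set E} (hK : Convex ℝ K)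
    (hK₀ : K ∈ 𝓝 0) {ℓ : StrongDual ℝ E} (hℓ : ℓ ≠ 0) {y : E} (hy : y ∈ frontier K)
    (hℓy : ℓ y = 0) : y ∈ closure (frontier K ∩ {z | ℓ z < 0}) := by
  have hgauge : Continuous (gauge K) := continuous_gauge hK hK₀
  have hgy : gauge K y = 1 := (gauge_eq_one_iff_mem_frontier hK hK₀).2 hy
  set R : E → E := fun z => (gauge K z)⁻¹ • z
  have hRy : R y = y := by simp [R, hgy]
  have hRcont : ContinuousAt R y :=
    (hgauge.continuousAt.inv₀ (by simp [hgy])).smul continuousAt_id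
  have hy_neg : y ∈ closure {z | ℓ z < 0} := by
    change y ∈ closure (ℓ ⁻¹' Iio 0)
    rw [← (ℓ.isOpenMap_of_ne_zero hℓ).preimage_closure_eq_closure_preimage
      ℓ.continuous, closure_Iio]
    exact hℓy.le
  have hy_cl : y ∈ closure ({z | 0 < gauge K z} ∩ {z | ℓ z < 0}) :=
    (isOpen_lt continuous_const hgauge).inter_closure ⟨by simp [hgy], hy_neg⟩
  have hR_maps : R '' ({z | 0 < gauge K z} ∩ {z | ℓ z < 0}) ⊆ frontier K ∩ {z | ℓ z < 0} := by
    rintro _ ⟨z, ⟨hz_pos, hz_neg⟩, rfl⟩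
    refine ⟨(gauge_eq_one_iff_mem_frontier hK hK₀).1 ?_, ?_⟩
    · rw [gauge_smul_of_nonneg (inv_nonneg.2 hz_pos.le), smul_eq_mul, inv_mul_cancel₀ hz_pos.ne']
    · simpa [R, map_smul] using mul_neg_of_pos_of_neg (inv_pos.2 hz_pos) hz_neg
  simpa [hRy] using closure_mono hR_maps (mem_closure_image hRcont hy_cl)

theorem mem_closure_frontier_inter_lt {K : Set E} (hK : Convex ℝ K) {ℓ : StrongDual ℝ E}
    (hℓ : ℓ ≠ 0) {c : ℝ} {x₀ : E} (hx₀ : x₀ ∈ interior K) (hℓx₀ : ℓ x₀ = c) {y : E}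
    (hy : y ∈ frontier K) (hℓy : ℓ y = c) : y ∈ closure (frontier K ∩ {z | ℓ z < c}) := by
  let τ := Homeomorph.addLeft x₀
  have hτK : Convex ℝ (τ ⁻¹' K) := hK.translate_preimage_right x₀
  have hτK₀ : τ ⁻¹' K ∈ 𝓝 0 := by
    refine τ.continuous.continuousAt.preimage_mem_nhds ?_
    simpa [τ] using mem_interior_iff_mem_nhds.1 hx₀
  have hτy : y - x₀ ∈ frontier (τ ⁻¹' K) := by
    rw [← τ.preimage_frontier]
    simpa [τ] using hy
  have key :=
    mem_closure_frontier_inter_neg_of_mem_nhds_zero hτK hτK₀ hℓ hτy (by simp [hℓy, hℓx₀])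
  have hpre : frontier (τ ⁻¹' K) ∩ {z | ℓ z < 0} = τ ⁻¹' (frontier K ∩ {z | ℓ z < c}) := by
    rw [← τ.preimage_frontier]
    ext z
    simp [τ, hℓx₀]
  rw [hpre, ← τ.preimage_closure] at key
  simpa [τ] using key

end HalfspaceClosure

theorem interior_frontier_setOf_le_of_forall_mem_closure_lt {Y : Type*} [TopologicalSpace Y]
    {f : Y → ℝ} (hf : Continuous f) {c : ℝ}
    (hlevel : ∀ y, f y = c → y ∈ closure {y | f y < c}) :
    interior {y | c ≤ f y} = {y | c < f y} ∧ frontier {y | c ≤ f y} = {y | f y = c} := by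
  have hint : interior {y | c ≤ f y} = {y | c < f y} := by
    refine subset_antisymm (fun y hy => ?_) <|
      interior_maximal (ofPred_subset_ofPred.2 fun _ => le_of_lt) (isOpen_lt continuous_const hf)
    have hle : c ≤ f y := interior_subset (s := {y | c ≤ f y}) hy
    refine hle.lt_of_ne fun hyc => ?_
    have hcl := hlevel y hyc.symm
    rw [show {y | f y < c} = {y | c ≤ f y}ᶜ by ext; simp, closure_compl] at hcl
    exact hcl hy
  refine ⟨hint, ?_⟩
  rw [(isClosed_le continuous_const hf).frontier_eq, hint]
  ext y
  simp [le_antisymm_iff, and_comm]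

theorem kDisk_interior_frontier_general
    (K : Set (EuclideanSpace ℝ (Fin 3)))
    (hKconv : Convex ℝ K)
    (u : EuclideanSpace ℝ (Fin 3)) (hu : u ≠ 0) (c : ℝ)
    (hmeet : ({y : EuclideanSpace ℝ (Fin 3) | ⟪y, u⟫ = c} ∩ interior K).Nonempty) :
    interior {y : frontier K | c ≤ ⟪(y : EuclideanSpace ℝ (Fin 3)), u⟫} =
      {y : frontier K | c < ⟪(y : EuclideanSpace ℝ (Fin 3)), u⟫} ∧
    frontier {y : frontier K | c ≤ ⟪(y : EuclideanSpace ℝ (Fin 3)), u⟫} =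
      {y : frontier K | ⟪(y : EuclideanSpace ℝ (Fin 3)), u⟫ = c} := by
  obtain ⟨x₀, hx₀c, hx₀⟩ := hmeet
  have hℓ : innerSLFlip ℝ u ≠ 0 := fun h => hu <| inner_self_eq_zero.1 <| by
    rw [← innerSLFlip_apply_apply, h, zero_apply]
  refine interior_frontier_setOf_le_of_forall_mem_closure_lt
    (continuous_subtype_val.inner continuous_const) fun y hy => ?_
  rw [closure_subtype, show {y : frontier K | ⟪(y : EuclideanSpace ℝ (Fin 3)), u⟫ < c} =
    Subtype.val ⁻¹' {z | innerSLFlip ℝ u z < c} from rfl, Subtype.image_preimage_coe]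
  exact mem_closure_frontier_inter_lt hKconv hℓ hx₀ hx₀c y.2 hy

/-- For a strictly convex body `K ⊆ ℝ³` and a closed half-space
whose bounding plane meets the interior of `K`, the `K`-disk
`D = {y ∈ frontier K | ⟪y, u⟫ ≥ c}` has, relative to the subspace topology of
`frontier K`, interior `{y | ⟪y, u⟫ > c}` and frontier `{y | ⟪y, u⟫ = c}`. -/
theorem kDisk_interior_frontier
    (K : Set (EuclideanSpace ℝ (Fin 3)))
    (hKcomp : IsCompact K) (hKconv : Convex ℝ K)
    (hKint : (interior K).Nonempty) (hKstrict : StrictConvex ℝ K)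
    (u : EuclideanSpace ℝ (Fin 3)) (hu : u ≠ 0) (c : ℝ)
    (hmeet : ({y : EuclideanSpace ℝ (Fin 3) | ⟪y, u⟫ = c} ∩ interior K).Nonempty) :
    interior {y : frontier K | c ≤ ⟪(y : EuclideanSpace ℝ (Fin 3)), u⟫} =
      {y : frontier K | c < ⟪(y : EuclideanSpace ℝ (Fin 3)), u⟫} ∧
    frontier {y : frontier K | c ≤ ⟪(y : EuclideanSpace ℝ (Fin 3)), u⟫} =
      {y : frontier K | ⟪(y : EuclideanSpace ℝ (Fin 3)), u⟫ = c} :=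
  kDisk_interior_frontier_general K hKconv u hu c hmeet
end
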